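/- Let r, s ≥ 3 be integers, let G ≤ Aut(Γ(r,s)) be transitive on the vertices of Γ(r,s), and let L be a normal subgroup of G of order 2. If the normal quotient Γ(r,s)_L is isomorphic to a cycle graph C_m for some m ≥ 3, then r = 4 or s = 4, and the non-identity element of L maps the vertex (0,0) to one of the vertices (2,0), (2,2), or (0,2). -/

import Mathlib

open SimpleGraph

namespace OG4

variable {V : Type*} {W : Type*}

/-! ### Normal quotients, cycles, and basic pairs -/

/-- The setoid of orbits of a group `N` of permutations of `V`. -/
def orbitSetoid (N : Subgroup (Equiv.Perm V)) : Setoid V := MulAction.orbitRel N V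

/-- The (normal) quotient graph of a graph `Γ` with respect to a group `N` of permutations:
its vertices are the `N`-orbits, two distinct orbits being adjacent iff some vertex of one is
adjacent in `Γ` to some vertex of the other. -/
def quotientGraph (Γ : SimpleGraph V) (N : Subgroup (Equiv.Perm V)) :
    SimpleGraph (Quotient (orbitSetoid N)) :=
  SimpleGraph.fromRel fun a b =>
    ∃ x y : V, Quotient.mk (orbitSetoid N) x = a ∧ Quotient.mk (orbitSetoid N) y = b ∧ Γ.Adj x y

/-- `N` is a normal subgroup of the subgroup `G` (of some ambient group). -/
def NormalIn {G : Type*} [Group G] (N H : Subgroup G) : Prop :=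
  N ≤ H ∧ ∀ h ∈ H, ∀ n ∈ N, h * n * h⁻¹ ∈ N

/-- A graph is isomorphic to a cycle graph `C_m` for some `m ≥ 3`. -/
def IsoCycle (Δ : SimpleGraph W) : Prop :=
  ∃ m : ℕ, 3 ≤ m ∧ Nonempty (Δ ≃g SimpleGraph.cycleGraph m)

/-- Every normal quotient of `(Γ, G)` relative to a nontrivial normal subgroup is degenerate:
it has at most 2 vertices or is a cycle. -/
def IsBasic (Γ : SimpleGraph V) (G : Subgroup (Equiv.Perm V)) : Prop :=
  ∀ N : Subgroup (Equiv.Perm V), NormalIn N G → N ≠ ⊥ →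
    Nat.card (Quotient (orbitSetoid N)) ≤ 2 ∨ IsoCycle (quotientGraph Γ N)

/-- `(Γ, G)` is basic of cycle type. -/
def BasicOfCycleType (Γ : SimpleGraph V) (G : Subgroup (Equiv.Perm V)) : Prop :=
  IsBasic Γ G ∧
    ∃ N : Subgroup (Equiv.Perm V), NormalIn N G ∧ N ≠ ⊥ ∧ IsoCycle (quotientGraph Γ N)

/-- The kernel of the action of `G` on the set of `N`-orbits. -/
def orbitKernel (G N : Subgroup (Equiv.Perm V)) : Subgroup (Equiv.Perm V) where
  carrier := {g | g ∈ G ∧ ∀ x : V,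
    Quotient.mk (orbitSetoid N) (g x) = Quotient.mk (orbitSetoid N) x}
  one_mem' := ⟨G.one_mem, fun x => by simp⟩
  mul_mem' := by
    rintro a b ⟨haG, ha⟩ ⟨hbG, hb⟩
    refine ⟨G.mul_mem haG hbG, fun x => ?_⟩
    rw [Equiv.Perm.mul_apply, ha (b x), hb x]
  inv_mem' := by
    rintro a ⟨haG, ha⟩
    refine ⟨G.inv_mem haG, fun x => ?_⟩
    have h := ha (a⁻¹ x)
    rw [show a (a⁻¹ x) = x by simp] at h
    exact h.symm

/-- `(Γ, G)` has a pair of independent cyclic normal quotients. -/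
def HasIndepCyclicQuotients (Γ : SimpleGraph V) (G : Subgroup (Equiv.Perm V)) : Prop :=
  ∃ N M : Subgroup (Equiv.Perm V), NormalIn N G ∧ NormalIn M G ∧
    IsoCycle (quotientGraph Γ N) ∧ IsoCycle (quotientGraph Γ M) ∧
    ¬ IsoCycle (quotientGraph Γ (orbitKernel G N ⊓ orbitKernel G M))

/-- `(Γ, G)` is basic of independent-cycle type. -/
def BasicOfIndependentCycleType (Γ : SimpleGraph V) (G : Subgroup (Equiv.Perm V)) : Prop :=
  IsBasic Γ G ∧ HasIndepCyclicQuotients Γ G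

/-- Isomorphism of graph-group pairs: a graph isomorphism conjugating one group onto the other. -/
def PairIso (Γ : SimpleGraph V) (G : Subgroup (Equiv.Perm V))
    (Δ : SimpleGraph W) (H : Subgroup (Equiv.Perm W)) : Prop :=
  ∃ e : Γ ≃g Δ, ∀ h : Equiv.Perm W, h ∈ H ↔ ∃ g ∈ G, e.toEquiv.permCongr g = h

/-! ### Minimal normal subgroups -/

/-- `M` is a minimal normal subgroup of the ambient group. -/
def IsMinimalNormal {G : Type*} [Group G] (M : Subgroup G) : Prop :=
  M.Normal ∧ M ≠ ⊥ ∧ ∀ N : Subgroup G, N.Normal → N ≤ M → N = ⊥ ∨ N = M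

/-- `M` is a minimal normal subgroup of the subgroup `H`. -/
def IsMinimalNormalIn {G : Type*} [Group G] (M H : Subgroup G) : Prop :=
  NormalIn M H ∧ M ≠ ⊥ ∧ ∀ N : Subgroup G, NormalIn N H → N ≤ M → N = ⊥ ∨ N = M

/-! ### The graphs `Γ(r,s)` and their automorphisms -/

/-- In `Γ(r,s)`, the vertex `(i,j)` is joined to the four vertices `(i ± 1, j ± 1)`. -/
def gammaRel (r s : ℕ) (x y : ZMod r × ZMod s) : Prop :=
  (y.1 = x.1 + 1 ∨ y.1 = x.1 - 1) ∧ (y.2 = x.2 + 1 ∨ y.2 = x.2 - 1)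

/-- The graph `Γ(r,s)` on `ℤ_r × ℤ_s`. -/
def Gamma (r s : ℕ) : SimpleGraph (ZMod r × ZMod s) := SimpleGraph.fromRel (gammaRel r s)

/-- `μ : (i,j) ↦ (i+1, j)`. -/
def mu (r s : ℕ) : Equiv.Perm (ZMod r × ZMod s) :=
  (Equiv.addRight (1 : ZMod r)).prodCongr (Equiv.refl (ZMod s))

/-- `ν : (i,j) ↦ (i, j+1)`. -/
def nu (r s : ℕ) : Equiv.Perm (ZMod r × ZMod s) :=
  (Equiv.refl (ZMod r)).prodCongr (Equiv.addRight (1 : ZMod s))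

/-- `σ : (i,j) ↦ (-i, j)`. -/
def sigma (r s : ℕ) : Equiv.Perm (ZMod r × ZMod s) :=
  (Equiv.neg (ZMod r)).prodCongr (Equiv.refl (ZMod s))

/-- `τ : (i,j) ↦ (-i, -j)`. -/
def tau (r s : ℕ) : Equiv.Perm (ZMod r × ZMod s) :=
  (Equiv.neg (ZMod r)).prodCongr (Equiv.neg (ZMod s))

/-- `σν : (i,j) ↦ (-i, j+1)`. -/
def sigmaNu (r s : ℕ) : Equiv.Perm (ZMod r × ZMod s) :=
  (Equiv.neg (ZMod r)).prodCongr (Equiv.addRight (1 : ZMod s))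

/-- `μν : (i,j) ↦ (i+1, j+1)`. -/
def muNu (r s : ℕ) : Equiv.Perm (ZMod r × ZMod s) :=
  (Equiv.addRight (1 : ZMod r)).prodCongr (Equiv.addRight (1 : ZMod s))

/-- `σμν : (i,j) ↦ (-(i+1), j+1)`. -/
def sigmaMuNu (r s : ℕ) : Equiv.Perm (ZMod r × ZMod s) :=
  ((Equiv.addRight (1 : ZMod r)).trans (Equiv.neg (ZMod r))).prodCongr
    (Equiv.addRight (1 : ZMod s))

/-- `μ² : (i,j) ↦ (i+2, j)`. -/
def muSq (r s : ℕ) : Equiv.Perm (ZMod r × ZMod s) :=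
  (Equiv.addRight (2 : ZMod r)).prodCongr (Equiv.refl (ZMod s))

/-- `ν² : (i,j) ↦ (i, j+2)`. -/
def nuSq (r s : ℕ) : Equiv.Perm (ZMod r × ZMod s) :=
  (Equiv.refl (ZMod r)).prodCongr (Equiv.addRight (2 : ZMod s))

/-- `μ^k : (i,j) ↦ (i+k, j)`. -/
def muPow (r s k : ℕ) : Equiv.Perm (ZMod r × ZMod s) :=
  (Equiv.addRight ((k : ZMod r))).prodCongr (Equiv.refl (ZMod s))

/-- `μ^k ν² : (i,j) ↦ (i+k, j+2)`. -/
def muPowNuSq (r s k : ℕ) : Equiv.Perm (ZMod r × ZMod s) :=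
  (Equiv.addRight ((k : ZMod r))).prodCongr (Equiv.addRight (2 : ZMod s))

/-- `G(r,s) = ⟨μ, ν, σ⟩`. -/
def Ggroup (r s : ℕ) : Subgroup (Equiv.Perm (ZMod r × ZMod s)) :=
  Subgroup.closure {mu r s, nu r s, sigma r s}

/-- `H(r,s) = ⟨μ, σν, τ⟩`. -/
def Hgroup (r s : ℕ) : Subgroup (Equiv.Perm (ZMod r × ZMod s)) :=
  Subgroup.closure {mu r s, sigmaNu r s, tau r s}

/-! ### The graphs `Γ⁺(r,s)` (for `r`, `s` even) -/

/-- `X⁺`: the set of `(i,j)` with `i` and `j` of the same parity. -/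
def XPlus (r s : ℕ) : Set (ZMod r × ZMod s) := {x | x.1.val % 2 = x.2.val % 2}

/-- `Γ⁺(r,s)`, the subgraph of `Γ(r,s)` induced on `X⁺`. -/
def GammaPlus (r s : ℕ) : SimpleGraph (XPlus r s) :=
  SimpleGraph.induce (XPlus r s) (Gamma r s)

section parity

lemma val_add_one_mod_two (r : ℕ) (hr : 2 ∣ r) (hr0 : r ≠ 0) (i : ZMod r) :
    (i + 1).val % 2 = (i.val + 1) % 2 := by
  haveI : NeZero r := ⟨hr0⟩
  haveI : Fact (1 < r) := ⟨by have := Nat.le_of_dvd (Nat.pos_of_ne_zero hr0) hr; omega⟩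
  rw [ZMod.val_add, Nat.mod_mod_of_dvd _ hr, ZMod.val_one]

lemma val_add_two_mod_two (r : ℕ) (hr : 2 ∣ r) (hr0 : r ≠ 0) (i : ZMod r) :
    (i + 2).val % 2 = i.val % 2 := by
  have h1 := val_add_one_mod_two r hr hr0 i
  have h2 := val_add_one_mod_two r hr hr0 (i + 1)
  rw [show i + 1 + 1 = i + 2 by ring] at h2
  omega

lemma val_neg_mod_two (r : ℕ) (hr : 2 ∣ r) (hr0 : r ≠ 0) (i : ZMod r) :
    (-i).val % 2 = i.val % 2 := by
  haveI : NeZero r := ⟨hr0⟩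
  rcases eq_or_ne i 0 with h | h
  · simp [h]
  · have h1 : (-i).val = r - i.val := by rw [ZMod.neg_val]; simp [h]
    have h2 : i.val < r := ZMod.val_lt i
    have h3 : i.val ≠ 0 := fun hh => h ((ZMod.val_eq_zero i).mp hh)
    obtain ⟨t, rfl⟩ := hr
    rw [h1]
    omega

end parity

section plusPerms

variable (r s : ℕ)

/-- The restriction of `μ²` to `X⁺`. -/
def muSqP (hr : 2 ∣ r) (hr0 : r ≠ 0) : Equiv.Perm (XPlus r s) :=
  (muSq r s).subtypePerm (by
    intro x
    have h := val_add_two_mod_two r hr hr0 x.1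
    simp only [XPlus, Set.mem_setOf_eq, muSq, Equiv.prodCongr_apply, Prod.map,
      Equiv.coe_addRight, Equiv.refl_apply]
    omega)

/-- The restriction of `ν²` to `X⁺`. -/
def nuSqP (hs : 2 ∣ s) (hs0 : s ≠ 0) : Equiv.Perm (XPlus r s) :=
  (nuSq r s).subtypePerm (by
    intro x
    have h := val_add_two_mod_two s hs hs0 x.2
    simp only [XPlus, Set.mem_setOf_eq, nuSq, Equiv.prodCongr_apply, Prod.map,
      Equiv.coe_addRight, Equiv.refl_apply]
    omega)

/-- The restriction of `μν` to `X⁺`. -/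
def muNuP (hr : 2 ∣ r) (hr0 : r ≠ 0) (hs : 2 ∣ s) (hs0 : s ≠ 0) : Equiv.Perm (XPlus r s) :=
  (muNu r s).subtypePerm (by
    intro x
    have h1 := val_add_one_mod_two r hr hr0 x.1
    have h2 := val_add_one_mod_two s hs hs0 x.2
    simp only [XPlus, Set.mem_setOf_eq, muNu, Equiv.prodCongr_apply, Prod.map,
      Equiv.coe_addRight]
    omega)

/-- The restriction of `σ` to `X⁺`. -/
def sigmaP (hr : 2 ∣ r) (hr0 : r ≠ 0) : Equiv.Perm (XPlus r s) :=
  (sigma r s).subtypePerm (by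
    intro x
    have h := val_neg_mod_two r hr hr0 x.1
    simp only [XPlus, Set.mem_setOf_eq, sigma, Equiv.prodCongr_apply, Prod.map,
      Equiv.neg_apply, Equiv.refl_apply]
    omega)

/-- The restriction of `τ` to `X⁺`. -/
def tauP (hr : 2 ∣ r) (hr0 : r ≠ 0) (hs : 2 ∣ s) (hs0 : s ≠ 0) : Equiv.Perm (XPlus r s) :=
  (tau r s).subtypePerm (by
    intro x
    have h1 := val_neg_mod_two r hr hr0 x.1
    have h2 := val_neg_mod_two s hs hs0 x.2
    simp only [XPlus, Set.mem_setOf_eq, tau, Equiv.prodCongr_apply, Prod.map,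
      Equiv.neg_apply]
    omega)

/-- The restriction of `σμν` to `X⁺`. -/
def sigmaMuNuP (hr : 2 ∣ r) (hr0 : r ≠ 0) (hs : 2 ∣ s) (hs0 : s ≠ 0) :
    Equiv.Perm (XPlus r s) :=
  (sigmaMuNu r s).subtypePerm (by
    intro x
    have h1 := val_neg_mod_two r hr hr0 (x.1 + 1)
    have h2 := val_add_one_mod_two r hr hr0 x.1
    have h3 := val_add_one_mod_two s hs hs0 x.2
    simp only [XPlus, Set.mem_setOf_eq, sigmaMuNu, Equiv.prodCongr_apply, Prod.map,
      Equiv.trans_apply, Equiv.coe_addRight, Equiv.neg_apply]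
    omega)

/-- `G⁺(r,s) = ⟨μ², μν, σ⟩` acting on `X⁺`. -/
def GPlusGroup (hr : 2 ∣ r) (hr0 : r ≠ 0) (hs : 2 ∣ s) (hs0 : s ≠ 0) :
    Subgroup (Equiv.Perm (XPlus r s)) :=
  Subgroup.closure {muSqP r s hr hr0, muNuP r s hr hr0 hs hs0, sigmaP r s hr hr0}

/-- `H⁺(r,s) = ⟨μ², σμν, τ⟩` acting on `X⁺`. -/
def HPlusGroup (hr : 2 ∣ r) (hr0 : r ≠ 0) (hs : 2 ∣ s) (hs0 : s ≠ 0) :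
    Subgroup (Equiv.Perm (XPlus r s)) :=
  Subgroup.closure
    {muSqP r s hr hr0, sigmaMuNuP r s hr hr0 hs hs0, tauP r s hr hr0 hs hs0}

end plusPerms

/-! ### The standard double cover `Γ₂(r,s)` -/

/-- Adjacency of the double cover: `(i,j)_δ ~ (i ± 1, j ± 1)_{δ+1}`. -/
def gamma2Rel (r s : ℕ) (x y : (ZMod r × ZMod s) × ZMod 2) : Prop :=
  (y.1.1 = x.1.1 + 1 ∨ y.1.1 = x.1.1 - 1) ∧ (y.1.2 = x.1.2 + 1 ∨ y.1.2 = x.1.2 - 1) ∧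
    y.2 = x.2 + 1

/-- `Γ₂(r,s)`, the standard double cover of `Γ(r,s)`. -/
def Gamma2 (r s : ℕ) : SimpleGraph ((ZMod r × ZMod s) × ZMod 2) :=
  SimpleGraph.fromRel (gamma2Rel r s)

/-- `μ : (i,j)_δ ↦ (i+1, j)_δ` on the double cover. -/
def muD (r s : ℕ) : Equiv.Perm ((ZMod r × ZMod s) × ZMod 2) :=
  (mu r s).prodCongr (Equiv.refl (ZMod 2))

/-- `ν : (i,j)_δ ↦ (i, j+1)_δ` on the double cover. -/
def nuD (r s : ℕ) : Equiv.Perm ((ZMod r × ZMod s) × ZMod 2) :=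
  (nu r s).prodCongr (Equiv.refl (ZMod 2))

/-- `σ : (i,j)_δ ↦ (i, -j)_{δ+1}` on the double cover. -/
def sigmaD (r s : ℕ) : Equiv.Perm ((ZMod r × ZMod s) × ZMod 2) :=
  ((Equiv.refl (ZMod r)).prodCongr (Equiv.neg (ZMod s))).prodCongr
    (Equiv.addRight (1 : ZMod 2))

/-- `τ : (i,j)_δ ↦ (-i, -j)_δ` on the double cover. -/
def tauD (r s : ℕ) : Equiv.Perm ((ZMod r × ZMod s) × ZMod 2) :=
  (tau r s).prodCongr (Equiv.refl (ZMod 2))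

/-- `G₂(r,s) = ⟨μ, ν, σ, τ⟩` on the double cover. -/
def G2group (r s : ℕ) : Subgroup (Equiv.Perm ((ZMod r × ZMod s) × ZMod 2)) :=
  Subgroup.closure {muD r s, nuD r s, sigmaD r s, tauD r s}

/-!
The non-identity element `g` of `L` is central in the transitive group `G`, hence a
fixed-point-free involutory automorphism, and the `L`-classes are the pairs `{x, g x}`. In a
cycle every vertex has two neighbours, so the four neighbours `(±1, ±1)` of `0` meet at most two
classes besides that of `0`. If `g 0` is adjacent to `0`, this forces two of the remaining three
neighbours to be swapped by `g`, which produces a triangle; but `Γ(r,s)` has triangles only when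
`r = s = 3`, and then `g` would pair off an odd number of vertices. Otherwise `g` preserves the
neighbourhood of `0`, so `g 0` has the same neighbours as `0`, and this pins `g 0` down to
`(2,0)`, `(2,2)` or `(0,2)`, with the corresponding modulus equal to `4`.
-/

theorem Subgroup.eq_one_or_eq_of_card_eq_two {H : Type*} [Group H] {L : Subgroup H}
    (hL : Nat.card L = 2) {g l : H} (hg : g ∈ L) (hg1 : g ≠ 1) (hl : l ∈ L) : l = 1 ∨ l = g := by
  obtain ⟨y, -, hy⟩ := (Nat.card_eq_two_iff' (1 : L)).1 hL
  refine or_iff_not_imp_left.2 fun hl1 => ?_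
  have h₁ : (⟨l, hl⟩ : L) = y := hy _ fun h => hl1 (congrArg Subtype.val h)
  have h₂ : (⟨g, hg⟩ : L) = y := hy _ fun h => hg1 (congrArg Subtype.val h)
  exact congrArg Subtype.val (h₁.trans h₂.symm)

theorem Subgroup.sq_eq_one_of_card_eq_two {H : Type*} [Group H] {L : Subgroup H}
    (hL : Nat.card L = 2) {g : H} (hg : g ∈ L) : g ^ 2 = 1 := by
  simpa [hL] using congrArg Subtype.val (pow_card_eq_one' (G := L) (x := ⟨g, hg⟩))

theorem NormalIn.commute_of_card_eq_two {H : Type*} [Group H] {L G : Subgroup H}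
    (hLG : NormalIn L G) (hL : Nat.card L = 2) {g h : H} (hg : g ∈ L) (hg1 : g ≠ 1)
    (hh : h ∈ G) : Commute h g := by
  rcases Subgroup.eq_one_or_eq_of_card_eq_two hL hg hg1 (hLG.2 h hh g hg) with h1 | hconj
  · exact absurd (by simpa using h1) hg1
  · exact mul_inv_eq_iff_eq_mul.1 hconj

theorem apply_ne_self_of_commute {G : Subgroup (Equiv.Perm V)}
    (hG : ∀ x y : V, ∃ h ∈ G, h x = y) {g : Equiv.Perm V} (hg : ∀ h ∈ G, Commute h g)
    (hg1 : g ≠ 1) (x : V) : g x ≠ x := by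
  intro hx
  refine hg1 (Equiv.ext fun y => ?_)
  obtain ⟨h, hh, rfl⟩ := hG x y
  rw [Equiv.Perm.one_apply, ← Equiv.Perm.mul_apply, ← (hg h hh).eq, Equiv.Perm.mul_apply, hx]

theorem two_dvd_card_of_sq_eq_one {α : Type*} [Fintype α] [DecidableEq α] {σ : Equiv.Perm α}
    (hσ : σ ^ 2 = 1) (hfix : ∀ x, σ x ≠ x) : 2 ∣ Fintype.card α := by
  have := Equiv.Perm.card_compl_support_modEq (p := 2) (n := 1) (σ := σ) (by simpa using hσ)
  have hsupp : σ.supportᶜ = ∅ := by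
    ext x
    simp [hfix x]
  rw [hsupp, Finset.card_empty] at this
  exact Nat.modEq_zero_iff_dvd.1 this.symm

theorem mk_eq_mk_iff_of_forall_mem {L : Subgroup (Equiv.Perm V)} {g : Equiv.Perm V} (hg : g ∈ L)
    (hL : ∀ l ∈ L, l = 1 ∨ l = g) (x y : V) :
    Quotient.mk (orbitSetoid L) x = Quotient.mk (orbitSetoid L) y ↔ x = y ∨ x = g y := by
  constructor
  · intro h
    obtain ⟨⟨l, hl⟩, hlx⟩ := MulAction.mem_orbit_iff.1 (Quotient.exact h)
    rcases hL l hl with rfl | rfl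
    · exact Or.inl hlx.symm
    · exact Or.inr hlx.symm
  · rintro (rfl | rfl)
    · rfl
    · exact Quotient.sound (MulAction.mem_orbit_iff.2 ⟨⟨g, hg⟩, rfl⟩)

theorem quotientGraph_adj_mk {Γ : SimpleGraph V} {N : Subgroup (Equiv.Perm V)} {x y : V}
    (h : Γ.Adj x y) (hne : Quotient.mk (orbitSetoid N) x ≠ Quotient.mk (orbitSetoid N) y) :
    (quotientGraph Γ N).Adj (Quotient.mk _ x) (Quotient.mk _ y) :=
  (SimpleGraph.fromRel_adj _ _ _).2 ⟨hne, Or.inl ⟨x, y, rfl, rfl, h⟩⟩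

theorem IsoCycle.eq_or_eq_or_eq_of_adj {Δ : SimpleGraph W} (h : IsoCycle Δ) {d a b c : W}
    (ha : Δ.Adj d a) (hb : Δ.Adj d b) (hc : Δ.Adj d c) : a = b ∨ a = c ∨ b = c := by
  obtain ⟨m, hm, ⟨e⟩⟩ := h
  obtain ⟨n, rfl⟩ : ∃ n, m = n + 2 := ⟨m - 2, by omega⟩
  have hnbr : ∀ {z}, Δ.Adj d z → e z = e d - 1 ∨ e z = e d + 1 := fun hz => by
    simpa [← SimpleGraph.mem_neighborSet, cycleGraph_neighborSet] using e.map_adj_iff.2 hz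
  rcases hnbr ha with h₁ | h₁ <;> rcases hnbr hb with h₂ | h₂ <;> rcases hnbr hc with h₃ | h₃ <;>
    simp only [← e.apply_eq_iff_eq, h₁, h₂, h₃, true_or, or_true]

theorem eq_or_eq_apply_of_adj_of_isoCycle {Γ : SimpleGraph V} {L : Subgroup (Equiv.Perm V)}
    {g : Equiv.Perm V}
    (hmk : ∀ x y, Quotient.mk (orbitSetoid L) x = Quotient.mk (orbitSetoid L) y ↔ x = y ∨ x = g y)
    (hcyc : IsoCycle (quotientGraph Γ L)) {o y₁ y₂ y₃ : V} (h₁ : Γ.Adj o y₁) (h₂ : Γ.Adj o y₂)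
    (h₃ : Γ.Adj o y₃) (hy₁ : y₁ ≠ g o) (hy₂ : y₂ ≠ g o) (hy₃ : y₃ ≠ g o) :
    (y₂ = y₁ ∨ y₂ = g y₁) ∨ (y₃ = y₁ ∨ y₃ = g y₁) ∨ (y₃ = y₂ ∨ y₃ = g y₂) := by
  have hadj : ∀ {y}, Γ.Adj o y → y ≠ g o →
      (quotientGraph Γ L).Adj (Quotient.mk _ o) (Quotient.mk _ y) := fun hy hyo =>
    quotientGraph_adj_mk hy fun e => ((hmk _ _).1 e.symm).elim (Γ.ne_of_adj hy).symm hyo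
  rcases hcyc.eq_or_eq_or_eq_of_adj (hadj h₁ hy₁) (hadj h₂ hy₂) (hadj h₃ hy₃) with e | e | e
  · exact Or.inl ((hmk _ _).1 e.symm)
  · exact Or.inr (Or.inl ((hmk _ _).1 e.symm))
  · exact Or.inr (Or.inr ((hmk _ _).1 e.symm))

section PlusMinusOne

variable {R : Type*} [CommRing R] {a b : R}

theorem sub_mem_one_neg_one_iff : b - a ∈ ({1, -1} : Set R) ↔ b = a + 1 ∨ b = a - 1 := by
  simp only [Set.mem_insert_iff, Set.mem_singleton_iff, sub_eq_iff_eq_add', ← sub_eq_add_neg]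

theorem neg_mem_one_neg_one (ha : a ∈ ({1, -1} : Set R)) : -a ∈ ({1, -1} : Set R) := by
  rcases ha with rfl | rfl <;> simp

theorem sub_mem_one_neg_one_comm : a - b ∈ ({1, -1} : Set R) ↔ b - a ∈ ({1, -1} : Set R) :=
  ⟨fun h => by simpa using neg_mem_one_neg_one h, fun h => by simpa using neg_mem_one_neg_one h⟩

theorem ne_neg_of_mem_one_neg_one (h2 : (2 : R) ≠ 0) (ha : a ∈ ({1, -1} : Set R)) : a ≠ -a := by
  rcases ha with rfl | rfl <;> refine fun h => h2 ?_
  · linear_combination h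
  · linear_combination -h

theorem three_eq_zero_of_add_mem_one_neg_one (ha : a ∈ ({1, -1} : Set R))
    (hb : b ∈ ({1, -1} : Set R)) (hab : a + b ∈ ({1, -1} : Set R)) : (3 : R) = 0 := by
  simp only [Set.mem_insert_iff, Set.mem_singleton_iff] at ha hb hab
  rcases ha with rfl | rfl <;> rcases hb with rfl | rfl <;> rcases hab with h | h <;>
    first
      | linear_combination h | linear_combination -h
      | linear_combination 3 * h | linear_combination -3 * h

theorem eq_zero_or_eq_two_of_add_one_mem (h₁ : a + 1 ∈ ({1, -1} : Set R))
    (h₂ : a - 1 ∈ ({1, -1} : Set R)) : a = 0 ∨ (a = 2 ∧ (4 : R) = 0) := by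
  simp only [Set.mem_insert_iff, Set.mem_singleton_iff] at h₁ h₂
  rcases h₁ with h₁ | h₁
  · exact Or.inl (by linear_combination h₁)
  rcases h₂ with h₂ | h₂
  · exact Or.inr ⟨by linear_combination h₂, by linear_combination h₁ - h₂⟩
  · exact Or.inl (by linear_combination h₂)

end PlusMinusOne

theorem ZMod.eq_of_natCast_eq_zero {r n : ℕ} (h : (n : ZMod r) = 0) (hn : n ≠ 0)
    (hnr : n < 2 * r) : r = n :=
  (Nat.eq_of_dvd_of_lt_two_mul hn ((ZMod.natCast_eq_zero_iff n r).1 h) hnr).symm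

namespace Gamma

variable {r s : ℕ}

theorem adj_iff {x y : ZMod r × ZMod s} :
    (Gamma r s).Adj x y ↔
      x ≠ y ∧ y.1 - x.1 ∈ ({1, -1} : Set (ZMod r)) ∧ y.2 - x.2 ∈ ({1, -1} : Set (ZMod s)) := by
  simp only [Gamma, SimpleGraph.fromRel_adj, gammaRel, ← sub_mem_one_neg_one_iff,
    sub_mem_one_neg_one_comm (a := x.1), sub_mem_one_neg_one_comm (a := x.2), or_self]

theorem adj_zero_iff [Nontrivial (ZMod r)] {z : ZMod r × ZMod s} :
    (Gamma r s).Adj 0 z ↔ z.1 ∈ ({1, -1} : Set (ZMod r)) ∧ z.2 ∈ ({1, -1} : Set (ZMod s)) := by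
  simp only [adj_iff, Prod.fst_zero, Prod.snd_zero, sub_zero, and_iff_right_iff_imp]
  rintro ⟨h₁, -⟩ rfl
  simp at h₁

theorem three_eq_zero_of_adj_of_adj_of_adj {x y z : ZMod r × ZMod s} (hxy : (Gamma r s).Adj x y)
    (hyz : (Gamma r s).Adj y z) (hxz : (Gamma r s).Adj x z) :
    (3 : ZMod r) = 0 ∧ (3 : ZMod s) = 0 := by
  rw [adj_iff] at hxy hyz hxz
  exact ⟨three_eq_zero_of_add_mem_one_neg_one hxy.2.1 hyz.2.1 (by simpa using hxz.2.1),
    three_eq_zero_of_add_mem_one_neg_one hxy.2.2 hyz.2.2 (by simpa using hxz.2.2)⟩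

theorem eq_of_neighborSet_subset_neighborSet_zero (hr : 3 ≤ r) (hs : 3 ≤ s)
    {x : ZMod r × ZMod s} (hx : x ≠ 0)
    (hsub : (Gamma r s).neighborSet x ⊆ (Gamma r s).neighborSet 0) :
    (r = 4 ∨ s = 4) ∧ (x = (2, 0) ∨ x = (2, 2) ∨ x = (0, 2)) := by
  have : Fact (1 < r) := ⟨by omega⟩
  have hstep : ∀ c : ZMod r, ∀ d : ZMod s, c ∈ ({1, -1} : Set (ZMod r)) →
      d ∈ ({1, -1} : Set (ZMod s)) → (Gamma r s).Adj 0 (x.1 + c, x.2 + d) := fun c d hc hd =>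
    hsub <| adj_iff.2 ⟨fun h => by rcases hc with rfl | rfl <;> simpa using congrArg Prod.fst h,
      by simpa using hc, by simpa using hd⟩
  have hp := adj_zero_iff.1 (hstep 1 1 (by simp) (by simp))
  have hm := adj_zero_iff.1 (hstep (-1) (-1) (by simp) (by simp))
  simp only [← sub_eq_add_neg] at hm
  have h4 {n : ℕ} (hn : 3 ≤ n) (h : (4 : ZMod n) = 0) : n = 4 :=
    ZMod.eq_of_natCast_eq_zero (n := 4) (by exact_mod_cast h) four_ne_zero (by omega)
  rcases eq_zero_or_eq_two_of_add_one_mem hp.1 hm.1 with ha | ⟨ha, hr4⟩ <;>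
    rcases eq_zero_or_eq_two_of_add_one_mem hp.2 hm.2 with hb | ⟨hb, hs4⟩
  · exact absurd (Prod.ext ha hb) hx
  · exact ⟨Or.inr (h4 hs hs4), Or.inr (Or.inr (Prod.ext ha hb))⟩
  · exact ⟨Or.inl (h4 hr hr4), Or.inl (Prod.ext ha hb)⟩
  · exact ⟨Or.inl (h4 hr hr4), Or.inr (Or.inl (Prod.ext ha hb))⟩

end Gamma

section Involution

variable {r s : ℕ} {L : Subgroup (Equiv.Perm (ZMod r × ZMod s))} {g : Equiv.Perm (ZMod r × ZMod s)}

theorem Gamma.adj_zero_apply_of_adj_zero (h2r : (2 : ZMod r) ≠ 0) (h2s : (2 : ZMod s) ≠ 0)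
    (hmk : ∀ x y, Quotient.mk (orbitSetoid L) x = Quotient.mk (orbitSetoid L) y ↔ x = y ∨ x = g y)
    (hcyc : IsoCycle (quotientGraph (Gamma r s) L)) (h0 : ¬ (Gamma r s).Adj 0 (g 0))
    {y : ZMod r × ZMod s} (hy : (Gamma r s).Adj 0 y) : (Gamma r s).Adj 0 (g y) := by
  have : Nontrivial (ZMod r) := nontrivial_of_ne 2 0 h2r
  by_contra hgy
  obtain ⟨ha, hb⟩ := Gamma.adj_zero_iff.1 hy
  have hna := ne_neg_of_mem_one_neg_one h2r ha
  have hnb := ne_neg_of_mem_one_neg_one h2s hb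
  have hu : (Gamma r s).Adj 0 (y.1, -y.2) := Gamma.adj_zero_iff.2 ⟨ha, neg_mem_one_neg_one hb⟩
  have hv : (Gamma r s).Adj 0 (-y.1, y.2) := Gamma.adj_zero_iff.2 ⟨neg_mem_one_neg_one ha, hb⟩
  have hw : (Gamma r s).Adj 0 (-y.1, -y.2) :=
    Gamma.adj_zero_iff.2 ⟨neg_mem_one_neg_one ha, neg_mem_one_neg_one hb⟩
  have hne : ∀ {z}, (Gamma r s).Adj 0 z → z ≠ g 0 := fun hz h => h0 (h ▸ hz)
  have hney : ∀ {z}, (Gamma r s).Adj 0 z → z ≠ g y := fun hz h => hgy (h ▸ hz)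
  -- No other neighbour of `0` is in the class of `y`, so the three others fill at most two
  -- classes: both `(-y.1, y.2)` and `(-y.1, -y.2)` are forced to be `g (y.1, -y.2)`.
  have hv' := eq_or_eq_apply_of_adj_of_isoCycle hmk hcyc hy hu hv (hne hy) (hne hu) (hne hv)
  have hw' := eq_or_eq_apply_of_adj_of_isoCycle hmk hcyc hy hu hw (hne hy) (hne hu) (hne hw)
  simp only [hney hu, hney hv, hney hw, Prod.ext_iff, Ne.symm hna, Ne.symm hnb, and_false,
    false_and, or_false, false_or] at hv' hw'
  exact hnb (hv'.2.trans hw'.2.symm)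

theorem Gamma.three_eq_zero_of_adj_apply_zero (h2r : (2 : ZMod r) ≠ 0) (h2s : (2 : ZMod s) ≠ 0)
    (hmk : ∀ x y, Quotient.mk (orbitSetoid L) x = Quotient.mk (orbitSetoid L) y ↔ x = y ∨ x = g y)
    (hcyc : IsoCycle (quotientGraph (Gamma r s) L))
    (hg : ∀ x y, (Gamma r s).Adj (g x) (g y) ↔ (Gamma r s).Adj x y)
    (h0 : (Gamma r s).Adj 0 (g 0)) : (3 : ZMod r) = 0 ∧ (3 : ZMod s) = 0 := by
  have : Nontrivial (ZMod r) := nontrivial_of_ne 2 0 h2r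
  obtain ⟨ha, hb⟩ := Gamma.adj_zero_iff.1 h0
  have hna := ne_neg_of_mem_one_neg_one h2r ha
  have hnb := ne_neg_of_mem_one_neg_one h2s hb
  have h₁ : (Gamma r s).Adj 0 ((g 0).1, -(g 0).2) :=
    Gamma.adj_zero_iff.2 ⟨ha, neg_mem_one_neg_one hb⟩
  have h₂ : (Gamma r s).Adj 0 (-(g 0).1, (g 0).2) :=
    Gamma.adj_zero_iff.2 ⟨neg_mem_one_neg_one ha, hb⟩
  have h₃ : (Gamma r s).Adj 0 (-(g 0).1, -(g 0).2) :=
    Gamma.adj_zero_iff.2 ⟨neg_mem_one_neg_one ha, neg_mem_one_neg_one hb⟩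
  -- Two neighbours of `0` in one class give a neighbour of both `0` and `g 0`: a triangle.
  have htriangle : ∀ {z w}, (Gamma r s).Adj 0 z → (Gamma r s).Adj 0 w → z = g w →
      (3 : ZMod r) = 0 ∧ (3 : ZMod s) = 0 := fun hz hw hzw =>
    Gamma.three_eq_zero_of_adj_of_adj_of_adj h0 (hzw ▸ (hg 0 _).2 hw) hz
  rcases eq_or_eq_apply_of_adj_of_isoCycle hmk hcyc h₁ h₂ h₃
      (fun h => hnb (congrArg Prod.snd h).symm) (fun h => hna (congrArg Prod.fst h).symm)
      (fun h => hna (congrArg Prod.fst h).symm) with (h | h) | (h | h) | (h | h)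
  all_goals first
    | exact htriangle (by assumption) (by assumption) h
    | simp [Prod.ext_iff, Ne.symm hna, Ne.symm hnb] at h

theorem Gamma.neighborSet_apply_zero_subset (h2r : (2 : ZMod r) ≠ 0) (h2s : (2 : ZMod s) ≠ 0)
    (hmk : ∀ x y, Quotient.mk (orbitSetoid L) x = Quotient.mk (orbitSetoid L) y ↔ x = y ∨ x = g y)
    (hcyc : IsoCycle (quotientGraph (Gamma r s) L))
    (hg : ∀ x y, (Gamma r s).Adj (g x) (g y) ↔ (Gamma r s).Adj x y) (hinv : Function.Involutive g)
    (h0 : ¬ (Gamma r s).Adj 0 (g 0)) :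
    (Gamma r s).neighborSet (g 0) ⊆ (Gamma r s).neighborSet 0 := fun y hy => by
  have hy' : (Gamma r s).Adj 0 (g y) := (hg 0 (g y)).1 (by rwa [hinv y])
  simpa [hinv y] using Gamma.adj_zero_apply_of_adj_zero h2r h2s hmk hcyc h0 hy'

end Involution

/-- if `G ≤ Aut(Γ(r,s))` is vertex-transitive and `L` is a normal subgroup of
`G` of order `2` whose normal quotient is a cycle, then `r = 4` or `s = 4`, and the
non-identity element of `L` maps `(0,0)` to `(2,0)`, `(2,2)` or `(0,2)`. -/
theorem stmt10 (r s : ℕ) (hr : 3 ≤ r) (hs : 3 ≤ s)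
    (G : Subgroup (Equiv.Perm (ZMod r × ZMod s)))
    (hAut : ∀ g ∈ G, ∀ x y : ZMod r × ZMod s,
      (Gamma r s).Adj (g x) (g y) ↔ (Gamma r s).Adj x y)
    (hTrans : ∀ x y : ZMod r × ZMod s, ∃ g ∈ G, g x = y)
    (L : Subgroup (Equiv.Perm (ZMod r × ZMod s)))
    (hLnormal : NormalIn L G) (hLcard : Nat.card L = 2)
    (hcyc : IsoCycle (quotientGraph (Gamma r s) L)) :
    (r = 4 ∨ s = 4) ∧
      ∀ g ∈ L, g ≠ 1 →
        g ((0 : ZMod r), (0 : ZMod s)) = ((2 : ZMod r), (0 : ZMod s)) ∨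
        g ((0 : ZMod r), (0 : ZMod s)) = ((2 : ZMod r), (2 : ZMod s)) ∨
        g ((0 : ZMod r), (0 : ZMod s)) = ((0 : ZMod r), (2 : ZMod s)) := by
  obtain ⟨⟨g, hgL⟩, hg1, -⟩ := (Nat.card_eq_two_iff' (1 : L)).1 hLcard
  replace hg1 : g ≠ 1 := fun h => hg1 (Subtype.ext h)
  have hL (l) (hl : l ∈ L) : l = 1 ∨ l = g :=
    Subgroup.eq_one_or_eq_of_card_eq_two hLcard hgL hg1 hl
  have hmk := mk_eq_mk_iff_of_forall_mem hgL hL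
  have hfix := apply_ne_self_of_commute hTrans
    (fun h hh => hLnormal.commute_of_card_eq_two hLcard hgL hg1 hh) hg1
  have hsq := Subgroup.sq_eq_one_of_card_eq_two hLcard hgL
  have hinv : Function.Involutive g := fun x => by
    rw [← Equiv.Perm.mul_apply, ← sq, hsq, Equiv.Perm.one_apply]
  have hg := hAut g (hLnormal.1 hgL)
  have h2 {n : ℕ} (hn : 3 ≤ n) : (2 : ZMod n) ≠ 0 := fun h => absurd
    (ZMod.eq_of_natCast_eq_zero (n := 2) (by exact_mod_cast h) two_ne_zero (by omega)) (by omega)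
  by_cases h0 : (Gamma r s).Adj 0 (g 0)
  · -- A fixed-point-free involution needs an even number `r * s` of vertices.
    have : NeZero r := ⟨by omega⟩
    have : NeZero s := ⟨by omega⟩
    have heven := two_dvd_card_of_sq_eq_one hsq hfix
    obtain ⟨h3r, h3s⟩ := Gamma.three_eq_zero_of_adj_apply_zero (h2 hr) (h2 hs) hmk hcyc hg h0
    have h3 {n : ℕ} (hn : 3 ≤ n) (h : (3 : ZMod n) = 0) : n = 3 :=
      ZMod.eq_of_natCast_eq_zero (n := 3) (by exact_mod_cast h) three_ne_zero (by omega)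
    rw [Fintype.card_prod, ZMod.card, ZMod.card, h3 hr h3r, h3 hs h3s] at heven
    norm_num at heven
  · obtain ⟨h4, hg0⟩ := Gamma.eq_of_neighborSet_subset_neighborSet_zero hr hs (hfix 0)
      (Gamma.neighborSet_apply_zero_subset (h2 hr) (h2 hs) hmk hcyc hg hinv h0)
    exact ⟨h4, fun g' hg'L hg'1 => (hL g' hg'L).resolve_left hg'1 ▸ hg0⟩

end OG4
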